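/- Let X be a Banach space and (V_α)_{α<ω₁} a strictly increasing family of weak*-open subsets of a weak*-closed convex set F ⊆ B_{X*} with weak*-closure(V_α) ⊆ V_β for α < β, and set V = ⋃_{α<ω₁} V_α. If F \ V is nonempty, then there exists a point x in the weak closure of F \ V that also lies in the weak closure of V. -/

import Mathlib

/-!
Being convex, `F` is connected in the weak topology. It is covered by the weak closures of
`F \ V` and of `V`, which are both nonempty, so by connectedness these closures meet.
-/

open Cardinal

/-- The weak closure (with respect to the weak topology `σ(X*, X**)`) of a set of
functionals on a Banach space `X`, the functionals being given in the weak* dual. -/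
noncomputable def weakClosure {X : Type*} [NormedAddCommGroup X] [NormedSpace ℝ X]
    (S : Set (WeakDual ℝ X)) : Set (WeakDual ℝ X) :=
  letI j : WeakDual ℝ X → WeakSpace ℝ (StrongDual ℝ X) :=
    fun φ => toWeakSpace ℝ (StrongDual ℝ X) (WeakDual.toStrongDual φ)
  j ⁻¹' closure (j '' S)

open Set

theorem exists_mem_closure_image_diff_inter_closure_image {α β : Type*} [TopologicalSpace β]
    {f : α → β} {s t : Set α} (hs : IsPreconnected (f '' s)) (hts : t ⊆ s)
    (hdiff : (s \ t).Nonempty) (ht : t.Nonempty) :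
    ∃ x ∈ s, f x ∈ closure (f '' (s \ t)) ∧ f x ∈ closure (f '' t) := by
  have hcover : f '' s ⊆ closure (f '' (s \ t)) ∪ closure (f '' t) :=
    calc f '' s = f '' (s \ t) ∪ f '' t := by rw [← image_union, sdiff_union_of_subset hts]
      _ ⊆ _ := union_subset_union subset_closure subset_closure
  obtain ⟨y, hy⟩ := hdiff
  obtain ⟨z, hz⟩ := ht
  obtain ⟨_, ⟨x, hx, rfl⟩, hx_diff, hx_t⟩ :=
    isPreconnected_closed_iff.1 hs _ _ isClosed_closure isClosed_closure hcover
      ⟨f y, mem_image_of_mem f hy.1, subset_closure (mem_image_of_mem f hy)⟩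
      ⟨f z, mem_image_of_mem f (hts hz), subset_closure (mem_image_of_mem f hz)⟩
  exact ⟨x, hx, hx_diff, hx_t⟩

theorem Convex.isPreconnected_image_toWeakSpace {X : Type*} [NormedAddCommGroup X]
    [NormedSpace ℝ X] {F : Set (WeakDual ℝ X)} (hF : Convex ℝ F) :
    IsPreconnected
      ((fun φ => toWeakSpace ℝ (StrongDual ℝ X) (WeakDual.toStrongDual φ)) '' F) :=
  (hF.linear_image
    (WeakDual.toStrongDual.trans (toWeakSpace ℝ (StrongDual ℝ X))).toLinearMap).isPreconnected

theorem stmt19_general {X : Type*} [NormedAddCommGroup X] [NormedSpace ℝ X]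
    (F : Set (WeakDual ℝ X))
    (hFconv : Convex ℝ F)
    (V : Ordinal → Set (WeakDual ℝ X))
    (hVF : ∀ α < (aleph 1).ord, V α ⊆ F)
    (hstrict : ∀ α β : Ordinal, α < β → β < (aleph 1).ord → V α ⊂ V β)
    (hne : (F \ ⋃ α ∈ Set.Iio (aleph 1).ord, V α).Nonempty) :
    ∃ x : WeakDual ℝ X,
      x ∈ weakClosure (F \ ⋃ α ∈ Set.Iio (aleph 1).ord, V α) ∧
      x ∈ weakClosure (⋃ α ∈ Set.Iio (aleph 1).ord, V α) := by
  have hone : (1 : Ordinal) < (aleph 1).ord := lt_ord.2 (by simp)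
  have hVne : (⋃ α ∈ Iio (aleph 1).ord, V α).Nonempty := by
    obtain ⟨y, hy, -⟩ := exists_of_ssubset (hstrict 0 1 zero_lt_one hone)
    exact ⟨y, mem_biUnion hone hy⟩
  obtain ⟨x, -, hx⟩ := exists_mem_closure_image_diff_inter_closure_image
    hFconv.isPreconnected_image_toWeakSpace (iUnion₂_subset hVF) hne hVne
  exact ⟨x, hx⟩

/-- In the proof of Proposition 3.1: if `F` is a weak*-closed convex subset of the dual
ball of a Banach space, `(V_α)_{α<ω₁}` is a strictly increasing chain of relatively
weak*-open subsets of `F` with `closure (V_α) ⊆ V_β` for `α < β < ω₁`, and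
`V = ⋃_{α<ω₁} V_α` does not cover `F`, then some point lies simultaneously in the weak
closure of `F \ V` and in the weak closure of `V`. -/
theorem stmt19 {X : Type*} [NormedAddCommGroup X] [NormedSpace ℝ X] [CompleteSpace X]
    (F : Set (WeakDual ℝ X))
    (hFB : F ⊆ {φ : WeakDual ℝ X | ‖WeakDual.toStrongDual φ‖ ≤ 1})
    (hFclosed : IsClosed F) (hFconv : Convex ℝ F)
    (V : Ordinal → Set (WeakDual ℝ X))
    (hVF : ∀ α < (aleph 1).ord, V α ⊆ F)
    (hopen : ∀ α < (aleph 1).ord, ∃ W : Set (WeakDual ℝ X), IsOpen W ∧ V α = W ∩ F)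
    (hmono : ∀ α β : Ordinal, α < β → β < (aleph 1).ord → closure (V α) ⊆ V β)
    (hstrict : ∀ α β : Ordinal, α < β → β < (aleph 1).ord → V α ⊂ V β)
    (hne : (F \ ⋃ α ∈ Set.Iio (aleph 1).ord, V α).Nonempty) :
    ∃ x : WeakDual ℝ X,
      x ∈ weakClosure (F \ ⋃ α ∈ Set.Iio (aleph 1).ord, V α) ∧
      x ∈ weakClosure (⋃ α ∈ Set.Iio (aleph 1).ord, V α) :=
  stmt19_general F hFconv V hVF hstrict hne
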